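/- For every real number β with 0 < β < 1 and every M > 0, the functions u ↦ χ(u, ε²) := β ∫₀^u ((r + ε²)^β − ε^{2β})/r dr converge uniformly on the interval [0, M] to u ↦ u^β as ε → 0⁺; that is, sup_{u ∈ [0,M]} (u^β − χ(u, ε²)) → 0 as ε → 0⁺. -/

import Mathlib

open MeasureTheory Set Filter

/-- The smoothing function `χ(u, ε²) := β ∫₀ᵘ ((r + ε²)^β − ε^{2β})/r dr`
used to approximate `u ↦ u^β`. Powers with real exponents are `Real.rpow`. -/
noncomputable def chi (β ε u : ℝ) : ℝ :=
  β * ∫ r in (0:ℝ)..u, ((r + ε ^ 2) ^ β - ε ^ (2 * β)) / r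

/-!
Write `e = ε²`. Since `u ^ β = β ∫₀ᵘ r ^ (β - 1) dr`, the error `u ^ β - χ(u, e)` is `β` times
the integral over `[0, u]` of
`r ^ (β - 1) - ((r + e) ^ β - e ^ β) / r = (r ^ β + e ^ β - (r + e) ^ β) / r`.
By subadditivity of `t ↦ t ^ β` this integrand is nonnegative. It is at most `r ^ (β - 1)` and
at most `e ^ β / r`, hence at most their geometric mean `e ^ (β / 2) * r ^ (β / 2 - 1)`, which
is integrable at `0`. Integrating gives `0 ≤ u ^ β - χ(u, e) ≤ 2 ε ^ β u ^ (β / 2)`.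
-/

open intervalIntegral

noncomputable def chiIntegrand (β e r : ℝ) : ℝ := ((r + e) ^ β - e ^ β) / r

section

variable {β e r : ℝ}

lemma chiIntegrand_nonneg (hβ : 0 ≤ β) (he : 0 ≤ e) (hr : 0 ≤ r) :
    0 ≤ chiIntegrand β e r :=
  div_nonneg (sub_nonneg.2 (Real.rpow_le_rpow he (le_add_of_nonneg_left hr) hβ)) hr

lemma chiIntegrand_le_rpow_sub_one (hβ0 : 0 ≤ β) (hβ1 : β ≤ 1) (he : 0 ≤ e)
    (hr : 0 ≤ r) :
    chiIntegrand β e r ≤ r ^ (β - 1) := by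
  rcases hr.eq_or_lt with rfl | hr
  · simp [chiIntegrand, Real.rpow_nonneg]
  rw [Real.rpow_sub_one hr.ne', chiIntegrand]
  gcongr
  linarith [Real.rpow_add_le_add_rpow hr.le he hβ0 hβ1]

lemma rpow_sub_one_sub_chiIntegrand_le (hβ : 0 ≤ β) (he : 0 ≤ e) (hr : 0 < r) :
    r ^ (β - 1) - chiIntegrand β e r ≤ e ^ β / r := by
  rw [Real.rpow_sub_one hr.ne', chiIntegrand, div_sub_div_same]
  gcongr
  linarith [Real.rpow_le_rpow hr.le (le_add_of_nonneg_right he) hβ]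

lemma rpow_sub_one_sub_chiIntegrand_le_mul_rpow (hβ : 0 ≤ β) (he : 0 < e) (hr : 0 < r) :
    r ^ (β - 1) - chiIntegrand β e r ≤ e ^ (β / 2) * r ^ (β / 2 - 1) := by
  rcases le_total r e with hre | her
  · calc r ^ (β - 1) - chiIntegrand β e r
        ≤ r ^ (β - 1) := sub_le_self _ (chiIntegrand_nonneg hβ he.le hr.le)
      _ = r ^ (β / 2) * r ^ (β / 2 - 1) := by rw [← Real.rpow_add hr]; ring_nf
      _ ≤ e ^ (β / 2) * r ^ (β / 2 - 1) := by gcongr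
  · calc r ^ (β - 1) - chiIntegrand β e r
        ≤ e ^ β / r := rpow_sub_one_sub_chiIntegrand_le hβ he.le hr
      _ = e ^ (β / 2) * e ^ (β / 2) / r := by rw [← Real.rpow_add he]; ring_nf
      _ ≤ e ^ (β / 2) * r ^ (β / 2) / r := by gcongr
      _ = e ^ (β / 2) * r ^ (β / 2 - 1) := by rw [Real.rpow_sub_one hr.ne']; ring

lemma intervalIntegrable_chiIntegrand (hβ0 : 0 < β) (hβ1 : β ≤ 1) (he : 0 ≤ e) {b : ℝ}
    (hb : 0 ≤ b) : IntervalIntegrable (chiIntegrand β e) volume 0 b := by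
  refine (intervalIntegrable_rpow' (r := β - 1) (by linarith)).mono_fun
    (Measurable.aestronglyMeasurable (by unfold chiIntegrand; fun_prop)) ?_
  rw [uIoc_of_le hb]
  filter_upwards [ae_restrict_mem measurableSet_Ioc] with r hr
  rw [Real.norm_of_nonneg (chiIntegrand_nonneg hβ0.le he hr.1.le),
    Real.norm_of_nonneg (Real.rpow_nonneg hr.1.le _)]
  exact chiIntegrand_le_rpow_sub_one hβ0.le hβ1 he hr.1.le

lemma mul_integral_rpow_sub_one (hβ : 0 < β) (u : ℝ) :
    β * ∫ r in (0 : ℝ)..u, r ^ (β - 1) = u ^ β := by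
  rw [integral_rpow (Or.inl (by linarith)), sub_add_cancel, Real.zero_rpow hβ.ne', sub_zero]
  field_simp

end

lemma chi_eq_mul_integral_chiIntegrand (β u : ℝ) {ε : ℝ} (hε : 0 ≤ ε) :
    chi β ε u = β * ∫ r in (0 : ℝ)..u, chiIntegrand β (ε ^ 2) r := by
  rw [chi, Real.rpow_mul hε, Real.rpow_two]
  rfl

lemma abs_rpow_sub_chi_le {β ε u : ℝ} (hβ0 : 0 < β) (hβ1 : β ≤ 1) (hε : 0 < ε)
    (hu : 0 ≤ u) :
    |u ^ β - chi β ε u| ≤ 2 * ε ^ β * u ^ (β / 2) := by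
  set e := ε ^ 2 with he_def
  have he : 0 < e := by positivity
  have hpow : e ^ (β / 2) = ε ^ β := by
    rw [he_def, ← Real.rpow_two, ← Real.rpow_mul hε.le]
    ring_nf
  have hint : IntervalIntegrable (fun r => r ^ (β - 1) - chiIntegrand β e r) volume 0 u :=
    (intervalIntegrable_rpow' (by linarith)).sub
      (intervalIntegrable_chiIntegrand hβ0 hβ1 he.le hu)
  have herr :
      u ^ β - chi β ε u = β * ∫ r in (0 : ℝ)..u, (r ^ (β - 1) - chiIntegrand β e r) := by
    rw [chi_eq_mul_integral_chiIntegrand β u hε.le, ← mul_integral_rpow_sub_one hβ0 u,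
      integral_sub (intervalIntegrable_rpow' (by linarith))
        (intervalIntegrable_chiIntegrand hβ0 hβ1 he.le hu), mul_sub]
  have hlow : 0 ≤ ∫ r in (0 : ℝ)..u, (r ^ (β - 1) - chiIntegrand β e r) :=
    integral_nonneg hu fun r hr ↦
      sub_nonneg.2 (chiIntegrand_le_rpow_sub_one hβ0.le hβ1 he.le hr.1)
  have hup : ∫ r in (0 : ℝ)..u, (r ^ (β - 1) - chiIntegrand β e r)
      ≤ ∫ r in (0 : ℝ)..u, e ^ (β / 2) * r ^ (β / 2 - 1) :=
    integral_mono_on_of_le_Ioo hu hint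
      ((intervalIntegrable_rpow' (by linarith)).const_mul _)
      fun r hr ↦ rpow_sub_one_sub_chiIntegrand_le_mul_rpow hβ0.le he hr.1
  have hbound :
      β * ∫ r in (0 : ℝ)..u, e ^ (β / 2) * r ^ (β / 2 - 1) = 2 * ε ^ β * u ^ (β / 2) := by
    rw [intervalIntegral.integral_const_mul, ← hpow,
      ← mul_integral_rpow_sub_one (half_pos hβ0) u]
    ring
  rw [herr, abs_of_nonneg (mul_nonneg hβ0.le hlow), ← hbound]
  exact mul_le_mul_of_nonneg_left hup hβ0.le

theorem chi_tendstoUniformlyOn_rpow_general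
    (β : ℝ) (hβ0 : 0 < β) (hβ1 : β < 1) (M : ℝ) :
    TendstoUniformlyOn (fun (ε : ℝ) (u : ℝ) => chi β ε u) (fun u : ℝ => u ^ β)
      (nhdsWithin 0 (Ioi 0)) (Icc 0 M) := by
  have hbound :
      Tendsto (fun ε : ℝ ↦ 2 * ε ^ β * M ^ (β / 2)) (nhdsWithin 0 (Ioi 0)) (nhds 0) := by
    have h := (Real.continuousAt_rpow_const 0 β (Or.inr hβ0.le)).tendsto
    rw [Real.zero_rpow hβ0.ne'] at h
    simpa using ((h.mono_left nhdsWithin_le_nhds).const_mul 2).mul_const (M ^ (β / 2))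
  rw [Metric.tendstoUniformlyOn_iff]
  intro δ hδ
  filter_upwards [hbound.eventually (gt_mem_nhds hδ), self_mem_nhdsWithin]
    with ε hεδ (hε : 0 < ε) u hu
  calc dist (u ^ β) (chi β ε u)
      ≤ 2 * ε ^ β * u ^ (β / 2) := abs_rpow_sub_chi_le hβ0 hβ1.le hε hu.1
    _ ≤ 2 * ε ^ β * M ^ (β / 2) := by gcongr; exacts [hu.1, hu.2]
    _ < δ := hεδ

/-- For `0 < β < 1` and `M > 0`, the functions `u ↦ χ(u, ε²)` converge uniformly on
`[0, M]` to `u ↦ u^β` as `ε → 0⁺`. -/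
theorem chi_tendstoUniformlyOn_rpow
    (β : ℝ) (hβ0 : 0 < β) (hβ1 : β < 1) (M : ℝ) (hM : 0 < M) :
    TendstoUniformlyOn (fun (ε : ℝ) (u : ℝ) => chi β ε u) (fun u : ℝ => u ^ β)
      (nhdsWithin 0 (Ioi 0)) (Icc 0 M) :=
  chi_tendstoUniformlyOn_rpow_general β hβ0 hβ1 M
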